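/- arXiv:1709.06070 — 9 statements merged into one kernel-verified Lean document; each statement's English description precedes it below -/
import Mathlib

section
/- Let R be a ring, E an abelian group, and χ : R → E an additive homomorphism that is left torsion-free (i.e., ker χ contains no nonzero left ideal of R). Then for every n ≥ 1, the composite χ ∘ tr : Mₙ(R) → E of χ with the matrix trace is left torsion-free on the matrix ring Mₙ(R). -/
/-- If `χ : R → E` is a left torsion-free additive homomorphism (its kernel contains no
nonzero left ideal of `R`), then for every `n ≥ 1` the composite of `χ` with the matrix
trace is left torsion-free on the matrix ring `Mₙ(R)`. -/
theorem trace_character_left_torsion_free {R E : Type*} [Ring R] [AddCommGroup E]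
    (χ : R →+ E) (hχ : ∀ I : Ideal R, (∀ x ∈ I, χ x = 0) → I = ⊥)
    (n : ℕ) (hn : 1 ≤ n) :
    ∀ I : Ideal (Matrix (Fin n) (Fin n) R),
      (∀ m ∈ I, (χ.comp (Matrix.traceAddMonoidHom (Fin n) R)) m = 0) → I = ⊥ := by
  intro I hI
  rw [eq_bot_iff]
  intro m hm
  simp only [Ideal.mem_bot]
  ext i j
  -- key: for all r, χ (r * m i j) = 0
  have key : ∀ r : R, χ (r * m i j) = 0 := by
    intro r
    have hmem : Matrix.single j i r * m ∈ I := I.mul_mem_left _ hm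
    have := hI _ hmem
    simpa [Matrix.traceAddMonoidHom, Matrix.trace, Matrix.diag, Matrix.mul_apply,
      Matrix.single, ite_and, Finset.mul_sum] using this
  have hspan := hχ (Ideal.span {m i j}) (by
    intro x hx
    obtain ⟨r, rfl⟩ := Submodule.mem_span_singleton.mp hx
    simpa using key r)
  have : m i j ∈ Ideal.span {m i j} := Ideal.subset_span rfl
  rw [hspan] at this
  simpa using this
end

section
/- Let G be an abelian group and let H₁, …, Hₙ be subgroups covering G (G = H₁ ∪ ⋯ ∪ Hₙ) such that the cover is irredundant, i.e., for each i, G ≠ ⋃_{j ≠ i} Hⱼ. Then the quotient group G / (H₁ ∩ ⋯ ∩ Hₙ) is finite. -/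
open scoped Pointwise
/-- Passman–Gottlieb covering lemma: if an abelian group `G` is covered by finitely many
subgroups `H₁, …, Hₙ` and the cover is irredundant (no proper subfamily covers `G`), then
`G / (H₁ ∩ ⋯ ∩ Hₙ)` is finite. -/
theorem passman_gottlieb {G : Type*} [CommGroup G] {n : ℕ} (H : Fin n → Subgroup G)
    (hcover : ∀ g : G, ∃ i, g ∈ H i)
    (hirr : ∀ i, ∃ g : G, ∀ j, j ≠ i → g ∉ H j) :
    Finite (G ⧸ ⨅ i, H i) := by
  classical
  have hcovers : ⋃ i ∈ (Finset.univ : Finset (Fin n)), (1 : G) • (H i : Set G) = Set.univ := by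
    ext g
    simp only [Set.mem_univ, iff_true, Set.mem_iUnion, one_smul]
    obtain ⟨i, hi⟩ := hcover g
    exact ⟨i, Finset.mem_univ i, hi⟩
  have hfilter := Subgroup.leftCoset_cover_filter_FiniteIndex hcovers
  have hfi : ∀ i, (H i).FiniteIndex := by
    intro i
    obtain ⟨g, hg⟩ := hirr i
    have : g ∈ ⋃ k ∈ Finset.univ.filter (fun i => (H i).FiniteIndex),
        (1 : G) • (H k : Set G) := hfilter ▸ Set.mem_univ g
    simp only [Set.mem_iUnion, one_smul, Finset.mem_filter, Finset.mem_univ, true_and] at this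
    obtain ⟨k, hk, hgk⟩ := this
    rcases eq_or_ne k i with rfl | hne
    · exact hk
    · exact absurd hgk (hg k hne)
  have : (⨅ i, H i).FiniteIndex := Subgroup.finiteIndex_iInf fun i => hfi i
  exact @Subgroup.finite_quotient_of_finiteIndex G _ _ this
end

section
/- Let R be a ring and X a compact right R-module (a compact Hausdorff abelian topological group with a right R-action by continuous endomorphisms). Suppose that every finite cover of X by finite-index closed submodules contains X itself. Then X is almost monothetic: every finite cover of X by closed submodules contains X itself. -/
/-! By B. H. Neumann's lemma, discarding the infinite-index members of a finite cover of an
abelian group by subgroups leaves a cover. So a finite cover of `X` by closed submodules has a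
subcover by finite-index closed submodules, which contains `X` by hypothesis. -/

/-- A compact right `R`-module `X` is almost monothetic if every finite cover of `X` by
closed submodules contains `X` (i.e. `⊤`) itself. Right modules are `Rᵐᵒᵖ`-modules. -/
def AlmostMonothetic (R X : Type*) [Ring R] [AddCommGroup X] [Module Rᵐᵒᵖ X]
    [TopologicalSpace X] : Prop :=
  ∀ M : Finset (Submodule Rᵐᵒᵖ X), (∀ N ∈ M, IsClosed (N : Set X)) →
    (∀ x : X, ∃ N ∈ M, x ∈ N) → ⊤ ∈ M

open Pointwise in
theorem Submodule.exists_finiteIndex_of_forall_exists_mem {R M : Type*} [Ring R]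
    [AddCommGroup M] [Module R M] {s : Finset (Submodule R M)}
    (hcovers : ∀ x : M, ∃ N ∈ s, x ∈ N) (x : M) :
    ∃ N ∈ s, N.toAddSubgroup.FiniteIndex ∧ x ∈ N := by
  classical
  have hcovers' : ⋃ N ∈ s, (0 : M) +ᵥ (N.toAddSubgroup : Set M) = Set.univ := by
    simpa only [zero_vadd, Submodule.coe_toAddSubgroup, Set.iUnion₂_eq_univ_iff, SetLike.mem_coe,
      exists_prop] using hcovers
  have hfilter := AddSubgroup.leftCoset_cover_filter_FiniteIndex hcovers'
  simp only [zero_vadd, Submodule.coe_toAddSubgroup, Set.iUnion₂_eq_univ_iff,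
    Finset.mem_filter] at hfilter
  obtain ⟨N, ⟨hN, hfi⟩, hx⟩ := hfilter x
  exact ⟨N, hN, hfi, hx⟩

theorem almostMonothetic_of_finite_index_covers_general (R X : Type*) [Ring R] [AddCommGroup X]
    [Module Rᵐᵒᵖ X] [TopologicalSpace X]
    (h : ∀ M : Finset (Submodule Rᵐᵒᵖ X), (∀ N ∈ M, IsClosed (N : Set X)) →
      (∀ N ∈ M, Finite (X ⧸ N)) → (∀ x : X, ∃ N ∈ M, x ∈ N) → ⊤ ∈ M) :
    AlmostMonothetic R X := by
  classical
  intro M hclosed hcov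
  refine Finset.filter_subset (·.toAddSubgroup.FiniteIndex) M (h _ ?closed ?finite ?covers)
  case closed => exact fun N hN => hclosed N (Finset.mem_filter.mp hN).1
  case finite =>
    intro N hN
    have := (Finset.mem_filter.mp hN).2
    exact AddSubgroup.finite_quotient_of_finiteIndex
  case covers =>
    intro x
    obtain ⟨N, hN, hfi, hx⟩ := Submodule.exists_finiteIndex_of_forall_exists_mem hcov x
    exact ⟨N, Finset.mem_filter.mpr ⟨hN, hfi⟩, hx⟩

/-- If every finite cover of a compact right `R`-module `X` by finite-index closed
submodules contains `X` itself, then `X` is almost monothetic. -/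
theorem almostMonothetic_of_finite_index_covers (R X : Type*) [Ring R] [AddCommGroup X]
    [Module Rᵐᵒᵖ X] [TopologicalSpace X] [CompactSpace X] [T2Space X]
    [IsTopologicalAddGroup X]
    (hcont : ∀ r : Rᵐᵒᵖ, Continuous fun x : X => r • x)
    (h : ∀ M : Finset (Submodule Rᵐᵒᵖ X), (∀ N ∈ M, IsClosed (N : Set X)) →
      (∀ N ∈ M, Finite (X ⧸ N)) → (∀ x : X, ∃ N ∈ M, x ∈ N) → ⊤ ∈ M) :
    AlmostMonothetic R X :=
  almostMonothetic_of_finite_index_covers_general R X h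
end

section
/- Let R be a ring and X a compact right R-module. If X is not equal to the union of its proper closed submodules of finite index, then X is almost monothetic. -/
/-!
By B. H. Neumann's lemma, in a finite cover of a group by subgroups the subgroups of infinite
index may be discarded. So in a finite cover of `X` by closed submodules, the element `x` avoiding
every proper closed submodule of finite index lies in a closed submodule of finite index from
the cover, which must then be `⊤`.
-/

theorem Submodule.finite_quotient_of_finiteIndex {R M : Type*} [Ring R] [AddCommGroup M]
    [Module R M] (p : Submodule R M) [p.toAddSubgroup.FiniteIndex] : Finite (M ⧸ p) :=
  AddSubgroup.finite_quotient_of_finiteIndex (H := p.toAddSubgroup)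

open scoped Pointwise in
theorem Submodule.exists_finiteIndex_mem_of_cover {R M ι : Type*} [Ring R] [AddCommGroup M]
    [Module R M] {p : ι → Submodule R M} {s : Finset ι}
    (hcovers : ⋃ i ∈ s, (p i : Set M) = Set.univ) (x : M) :
    ∃ i ∈ s, (p i).toAddSubgroup.FiniteIndex ∧ x ∈ p i := by
  classical
  have hcosets : ⋃ i ∈ s, (0 : M) +ᵥ ((p i).toAddSubgroup : Set M) = Set.univ := by
    simpa only [zero_vadd] using! hcovers
  have hx := (AddSubgroup.leftCoset_cover_filter_FiniteIndex hcosets).symm ▸ Set.mem_univ x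
  simp only [Set.mem_iUnion, Finset.mem_filter, zero_vadd, exists_prop] at hx
  obtain ⟨i, ⟨hi, hfin⟩, hxi⟩ := hx
  exact ⟨i, hi, hfin, hxi⟩

theorem almostMonothetic_of_not_covered_general (R X : Type*) [Ring R] [AddCommGroup X]
    [Module Rᵐᵒᵖ X] [TopologicalSpace X]
    (h : ∃ x : X, ∀ N : Submodule Rᵐᵒᵖ X,
      IsClosed (N : Set X) → Finite (X ⧸ N) → N ≠ ⊤ → x ∉ N) :
    AlmostMonothetic R X := by
  obtain ⟨x, hx⟩ := h
  intro M hclosed hcover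
  have hcovers : ⋃ N ∈ M, (N : Set X) = Set.univ :=
    Set.eq_univ_of_forall fun y => by simpa using hcover y
  obtain ⟨N, hNM, hfin, hxN⟩ :=
    Submodule.exists_finiteIndex_mem_of_cover (p := fun N => N) hcovers x
  by_contra htop
  exact hx N (hclosed N hNM) N.finite_quotient_of_finiteIndex (ne_of_mem_of_not_mem hNM htop) hxN

/-- If a compact right `R`-module `X` is not covered by its proper closed submodules of
finite index, then `X` is almost monothetic. -/
theorem almostMonothetic_of_not_covered (R X : Type*) [Ring R] [AddCommGroup X]
    [Module Rᵐᵒᵖ X] [TopologicalSpace X] [CompactSpace X] [T2Space X]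
    [IsTopologicalAddGroup X]
    (hcont : ∀ r : Rᵐᵒᵖ, Continuous fun x : X => r • x)
    (h : ∃ x : X, ∀ N : Submodule Rᵐᵒᵖ X,
      IsClosed (N : Set X) → Finite (X ⧸ N) → N ≠ ⊤ → x ∉ N) :
    AlmostMonothetic R X :=
  almostMonothetic_of_not_covered_general R X h
end

section
/- Let R be a left Artinian ring that is left pseudo-injective. Let M be a left R-module and g, h : M → R module homomorphisms with ker g = ker h. Then there exists a unit u ∈ R such that h(x) = g(x)·u for all x ∈ M. -/
/-!
Pseudo-injectivity, applied to the injective map `g x ↦ h x` on the left ideal `g(M)`, gives `a`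
with `h x = g x * a`; so it suffices to extend the monomorphism `· * a : g(M) → R` to right
multiplication by a unit. As `R` is left Noetherian (Hopkins–Levitzki), take a maximal left ideal
`I ⊇ g(M)` on which some `· * a'` agreeing with `· * a` on `g(M)` is injective. If `ker (· * a')`
were nonzero, it would contain a simple left ideal `S` with `S ∩ I = 0`. Either some copy
`m ≅ S` meets `I a'` trivially, and then `y + s ↦ y a' + e s` is an injective map on `I ⊕ S`,
hence a right multiplication, contradicting maximality; or the `S`-isotypic component lies in
`I a'`, on which the map `· * b` inverting `· * a'` (pseudo-injectivity again) is injective, so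
this fully invariant Artinian submodule is mapped onto itself and `S ⊆ I a' b = I`, absurd.
Thus `· * a'` is injective on `R`, hence bijective, and `a'` is a unit.
-/

open Function LinearMap Submodule

def IsLeftPseudoInjective (R : Type*) [Ring R] : Prop :=
  ∀ I : Ideal R, ∀ f : I →ₗ[R] R, Injective f → ∃ a : R, ∀ x : I, f x = (x : R) * a

theorem IsArtinian.map_eq_self_of_disjoint_ker {R M : Type*} [Ring R] [AddCommGroup M]
    [Module R M] [IsArtinian R M] (f : M →ₗ[R] M) {X : Submodule R M} (hX : X ≤ X.comap f)
    (hf : Disjoint X (ker f)) : X.map f = X := by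
  have hinj : Injective (f.restrict hX) := fun x y hxy =>
    injective_domRestrict_iff.2 hf (congrArg Subtype.val hxy)
  have hsurj := IsArtinian.surjective_of_injective_endomorphism _ hinj
  refine le_antisymm (map_le_iff_le_comap.2 hX) fun x hx => ?_
  obtain ⟨y, hy⟩ := hsurj ⟨x, hx⟩
  exact ⟨y, y.2, congrArg Subtype.val hy⟩

theorem isUnit_of_ker_toSpanSingleton_eq_bot {R : Type*} [Ring R] [IsArtinianRing R] {a : R}
    (ha : ker (toSpanSingleton R R a) = ⊥) : IsUnit a := by
  obtain ⟨x, hx⟩ :=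
    IsArtinian.surjective_of_injective_endomorphism _ (ker_eq_bot.1 ha) (1 : R)
  exact .of_mul_eq_one_right x (by simpa using hx)

namespace IsLeftPseudoInjective

section Ring

variable {R : Type*} [Ring R]

theorem exists_mul_eq_of_ker_eq (hR : IsLeftPseudoInjective R) {N : Type*} [AddCommGroup N]
    [Module R N] (f g : N →ₗ[R] R) (hker : ker f = ker g) :
    ∃ a : R, ∀ x, g x = f x * a := by
  have hinj : Injective ((ker f).liftQ g hker.le ∘ₗ f.quotKerEquivRange.symm.toLinearMap) :=
    (ker_eq_bot.1 (ker_liftQ_eq_bot' _ _ hker)).comp f.quotKerEquivRange.symm.injective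
  obtain ⟨a, ha⟩ := hR _ _ hinj
  exact ⟨a, fun x => by simpa using ha ⟨f x, mem_range_self f x⟩⟩

theorem exists_mul_mul_eq_self (hR : IsLeftPseudoInjective R) {I : Submodule R R} {a : R}
    (ha : Disjoint I (ker (toSpanSingleton R R a))) : ∃ b : R, ∀ y ∈ I, y * a * b = y := by
  have hker : ker ((toSpanSingleton R R a).domRestrict I) = ker I.subtype := by
    rwa [ker_subtype, ker_eq_bot, injective_domRestrict_iff]
  obtain ⟨b, hb⟩ := hR.exists_mul_eq_of_ker_eq _ _ hker
  exact ⟨b, fun y hy => by simpa using (hb ⟨y, hy⟩).symm⟩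

theorem exists_extension_of_disjoint (hR : IsLeftPseudoInjective R) {I S : Submodule R R}
    (hIS : Disjoint I S) {a : R} (ha : Disjoint I (ker (toSpanSingleton R R a)))
    (τ : S →ₗ[R] R) (hτ : Injective τ) (hτa : Disjoint (I.map (toSpanSingleton R R a)) (range τ)) :
    ∃ a' : R, (∀ y ∈ I, y * a' = y * a) ∧ Disjoint (I ⊔ S) (ker (toSpanSingleton R R a')) := by
  set ρ := (toSpanSingleton R R a).domRestrict I
  have hρ : ker ρ = ⊥ := by rwa [ker_eq_bot, injective_domRestrict_iff]
  have hker : ker (I.subtype.coprod S.subtype) = ker (ρ.coprod τ) := by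
    rw [ker_coprod_of_disjoint_range _ _ (by simpa using hIS),
      ker_coprod_of_disjoint_range _ _ (by simpa [ρ] using hτa), ker_subtype, ker_subtype, hρ,
      ker_eq_bot.2 hτ]
  obtain ⟨a', ha'⟩ := hR.exists_mul_eq_of_ker_eq _ _ hker
  refine ⟨a', fun y hy => by simpa [ρ] using (ha' (⟨y, hy⟩, 0)).symm, ?_⟩
  rw [sup_eq_range, disjoint_def]
  rintro _ ⟨n, rfl⟩ hn
  have : (ρ.coprod τ) n = 0 := by simpa [ha'] using hn
  rw [← mem_ker, ← hker] at this
  exact this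

end Ring

section Artinian

variable {R : Type*} [Ring R] [IsArtinianRing R]

theorem not_isotypicComponent_le_map (hR : IsLeftPseudoInjective R) {I S : Submodule R R}
    (hS : IsAtom S) (hIS : Disjoint I S) {a : R} (ha : Disjoint I (ker (toSpanSingleton R R a))) :
    ¬ isotypicComponent R R S ≤ I.map (toSpanSingleton R R a) := by
  intro hle
  have := isSimpleModule_iff_isAtom.2 hS
  obtain ⟨b, hb⟩ := hR.exists_mul_mul_eq_self ha
  have hback : (I.map (toSpanSingleton R R a)).map (toSpanSingleton R R b) ≤ I := by
    rintro _ ⟨_, ⟨y, hy, rfl⟩, rfl⟩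
    simpa [hb y hy] using hy
  have hbinj : Disjoint (I.map (toSpanSingleton R R a)) (ker (toSpanSingleton R R b)) := by
    rw [disjoint_def]
    rintro _ ⟨y, hy, rfl⟩ h0
    have hy0 : y = 0 := by simpa [hb y hy] using h0
    simp [hy0]
  have hfix := IsArtinian.map_eq_self_of_disjoint_ker (toSpanSingleton R R b)
    ((toSpanSingleton R R b).le_comap_isotypicComponent S) (hbinj.mono_left hle)
  have hSI : S ≤ I := calc
    S ≤ isotypicComponent R R S := S.le_isotypicComponent
    _ = (isotypicComponent R R S).map (toSpanSingleton R R b) := hfix.symm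
    _ ≤ (I.map (toSpanSingleton R R a)).map (toSpanSingleton R R b) := map_mono hle
    _ ≤ I := hback
  exact hS.1 (hIS.eq_bot_of_ge hSI)

theorem exists_extension_of_isAtom (hR : IsLeftPseudoInjective R) {I S : Submodule R R}
    (hS : IsAtom S) (hIS : Disjoint I S) {a : R} (ha : Disjoint I (ker (toSpanSingleton R R a))) :
    ∃ a' : R, (∀ y ∈ I, y * a' = y * a) ∧ Disjoint (I ⊔ S) (ker (toSpanSingleton R R a')) := by
  have := isSimpleModule_iff_isAtom.2 hS
  obtain ⟨m, ⟨e⟩, hm⟩ : ∃ m : Submodule R R, Nonempty (m ≃ₗ[R] S) ∧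
      ¬ m ≤ I.map (toSpanSingleton R R a) := by
    simpa [isotypicComponent, sSup_le_iff] using hR.not_isotypicComponent_le_map hS hIS ha
  have hm_atom : IsAtom m := isSimpleModule_iff_isAtom.1 (IsSimpleModule.congr e)
  refine hR.exists_extension_of_disjoint hIS ha (m.subtype ∘ₗ e.symm.toLinearMap)
    (m.injective_subtype.comp e.symm.injective) ?_
  rw [range_comp, LinearEquiv.range, Submodule.map_top, range_subtype]
  exact (hm_atom.not_le_iff_disjoint.1 hm).symm

theorem exists_unit_mul_eq_of_disjoint_ker (hR : IsLeftPseudoInjective R) {I : Submodule R R}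
    {a : R} (ha : Disjoint I (ker (toSpanSingleton R R a))) :
    ∃ u : Rˣ, ∀ y ∈ I, y * u = y * a := by
  obtain ⟨I', ⟨hII', a', ha'a, ha'⟩, hmax⟩ := set_has_maximal_iff_noetherian.2 inferInstance
    {I' : Submodule R R | I ≤ I' ∧ ∃ a' : R, (∀ y ∈ I, y * a' = y * a) ∧
      Disjoint I' (ker (toSpanSingleton R R a'))} ⟨I, le_rfl, a, fun _ _ => rfl, ha⟩
  suffices hker : ker (toSpanSingleton R R a') = ⊥ by
    obtain ⟨u, rfl⟩ := isUnit_of_ker_toSpanSingleton_eq_bot hker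
    exact ⟨u, ha'a⟩
  obtain h | ⟨S, hS, hSker⟩ := eq_bot_or_exists_atom_le (ker (toSpanSingleton R R a'))
  · exact h
  have hI'S : Disjoint I' S := ha'.mono_right hSker
  obtain ⟨a'', ha''a', ha''⟩ := hR.exists_extension_of_isAtom hS hI'S ha'
  refine absurd ?_ (hmax (I' ⊔ S) ⟨hII'.trans le_sup_left, a'', ?_, ha''⟩)
  · exact left_lt_sup.2 (hS.not_le_iff_disjoint.2 hI'S.symm)
  · intro y hy
    rw [ha''a' y (hII' hy), ha'a y hy]

end Artinian

end IsLeftPseudoInjective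

/-- Bass-type lemma: if `R` is a left Artinian, left pseudo-injective ring, `M` a left
`R`-module and `g, h : M → R` are module homomorphisms with `ker g = ker h`, then there is
a unit `u ∈ R` with `h(x) = g(x)·u` for all `x ∈ M`.  Left pseudo-injectivity means every
injective homomorphism from a left ideal into `R` is given by right multiplication. -/
theorem exists_unit_of_ker_eq_ker {R : Type*} [Ring R] [IsArtinianRing R]
    (hpi : ∀ I : Ideal R, ∀ f : I →ₗ[R] R, Function.Injective f →
      ∃ a : R, ∀ x : I, f x = (x : R) * a)
    {M : Type*} [AddCommGroup M] [Module R M]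
    (g h : M →ₗ[R] R) (hker : LinearMap.ker g = LinearMap.ker h) :
    ∃ u : Rˣ, ∀ x : M, h x = g x * u := by
  have hR : IsLeftPseudoInjective R := hpi
  obtain ⟨a, ha⟩ := hR.exists_mul_eq_of_ker_eq g h hker
  have hdisj : Disjoint (range g) (ker (toSpanSingleton R R a)) := by
    rw [disjoint_def]
    rintro _ ⟨x, rfl⟩ hx
    have : x ∈ ker h := by simpa [ha] using hx
    rwa [← hker] at this
  obtain ⟨u, hu⟩ := hR.exists_unit_mul_eq_of_disjoint_ker hdisj
  exact ⟨u, fun x => by rw [ha, hu _ (mem_range_self g x)]⟩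
end

section
/- Let R be a ring whose quotient R/rad(R) is semisimple (e.g., R left Artinian), and let a, b ∈ R. Then there exist a unit u ∈ R and r ∈ R such that u = a + (1 − ab)r. -/
open Submodule

namespace BassAux

variable {R M M' : Type*} [Ring R] [AddCommGroup M] [Module R M]
  [AddCommGroup M'] [Module R M']


variable {R M M' : Type*} [Ring R] [AddCommGroup M] [Module R M]
  [AddCommGroup M'] [Module R M']

/-- Two disjoint submodules: their sup is equivalent to their product. -/
noncomputable def supEquivProd (p q : Submodule R M) (h : p ⊓ q = ⊥) :
    (p × q) ≃ₗ[R] ↥(p ⊔ q) := by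
  have hinj : Function.Injective ⇑(p.subtype.coprod q.subtype) := by
    rw [← LinearMap.ker_eq_bot, LinearMap.ker_eq_bot']
    rintro ⟨⟨u, hu⟩, ⟨v, hv⟩⟩ huv
    have h0 : u + v = 0 := congrArg id huv
    have hu' : u ∈ p ⊓ q := ⟨hu, by
      have : u = -v := by rw [eq_neg_iff_add_eq_zero]; exact h0
      rw [this]; exact q.neg_mem hv⟩
    rw [h] at hu'
    have hu0 : u = 0 := hu'
    have hv0 : v = 0 := by rwa [hu0, zero_add] at h0
    simp [Prod.ext_iff, Subtype.ext_iff, hu0, hv0]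
  exact (LinearEquiv.ofInjective _ hinj).trans (LinearEquiv.ofEq _ _ (by
    rw [LinearMap.range_coprod, Submodule.range_subtype, Submodule.range_subtype]))

theorem comap_subtype_sup_eq_top {p q P : Submodule R M} (hp : p ≤ P) (hq : q ≤ P)
    (h : p ⊔ q = P) : comap P.subtype p ⊔ comap P.subtype q = ⊤ := by
  rw [eq_top_iff]
  rintro ⟨z, hz⟩ -
  rw [← h] at hz
  obtain ⟨u, hu, v, hv, rfl⟩ := mem_sup.mp hz
  refine mem_sup.mpr ⟨⟨u, hp hu⟩, hu, ⟨v, hq hv⟩, hv, rfl⟩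

theorem isCompl_comap_subtype {p q P : Submodule R M} (hp : p ≤ P) (hq : q ≤ P)
    (hbot : p ⊓ q = ⊥) (hsup : p ⊔ q = P) :
    IsCompl (comap P.subtype p) (comap P.subtype q) := by
  constructor
  · rw [disjoint_iff, ← comap_inf, hbot, comap_bot, ker_subtype]
  · rw [codisjoint_iff, comap_subtype_sup_eq_top hp hq hsup]

/-- One-step cancellation inside a semisimple module: complements of simple
isomorphic submodules are isomorphic.  No finiteness needed. -/
theorem onestep [IsSemisimpleModule R M] (A V A' V' : Submodule R M)
    (hAV : IsCompl A V) (hA'V' : IsCompl A' V')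
    (hV : IsSimpleModule R V) (hV' : IsSimpleModule R V') (e : V ≃ₗ[R] V') :
    Nonempty (A ≃ₗ[R] A') := by
  by_cases hVV' : V = V'
  · subst hVV'
    exact ⟨((quotientEquivOfIsCompl V A hAV.symm).symm.trans
      (quotientEquivOfIsCompl V A' hA'V'.symm))⟩
  · have hdisj : V ⊓ V' = ⊥ := by
      have hA : IsAtom V := isSimpleModule_iff_isAtom.mp hV
      have hA' : IsAtom V' := isSimpleModule_iff_isAtom.mp hV'
      by_contra hne
      have h1 : V ⊓ V' = V := by
        rcases (hA.le_iff.mp inf_le_left) with h | h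
        · exact absurd h hne
        · exact h
      have hle : V ≤ V' := h1 ▸ inf_le_right
      rcases hA'.le_iff.mp hle with h | h
      · exact hA.1 h
      · exact hVV' h
    obtain ⟨C, hC⟩ := exists_isCompl (V ⊔ V')
    have hVC : V ⊓ C = ⊥ := by
      rw [← le_bot_iff]
      calc V ⊓ C ≤ (V ⊔ V') ⊓ C := inf_le_inf_right C le_sup_left
      _ = ⊥ := by rw [← disjoint_iff.mp hC.disjoint]
    have hV'C : V' ⊓ C = ⊥ := by
      rw [← le_bot_iff]
      calc V' ⊓ C ≤ (V ⊔ V') ⊓ C := inf_le_inf_right C le_sup_right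
      _ = ⊥ := by rw [← disjoint_iff.mp hC.disjoint]
    -- IsCompl V (V' ⊔ C)
    have key : ∀ (W W' : Submodule R M), W ⊓ W' = ⊥ → W ≤ V ⊔ V' → W' ≤ V ⊔ V' →
        W ⊔ W' = V ⊔ V' → IsCompl W (W' ⊔ C) := by
      intro W W' hWW' hWle hW'le hWsup
      constructor
      · rw [disjoint_iff]
        have h1 : (W' ⊔ C) ⊓ (V ⊔ V') = W' := by
          rw [sup_inf_assoc_of_le _ hW'le, inf_comm C, disjoint_iff.mp hC.disjoint, sup_bot_eq]
        have : W ⊓ (W' ⊔ C) = W ⊓ ((W' ⊔ C) ⊓ (V ⊔ V')) := by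
          rw [inf_comm (W' ⊔ C) (V ⊔ V'), ← inf_assoc, inf_eq_left.mpr hWle]
        rw [this, h1, hWW']
      · rw [codisjoint_iff, ← sup_assoc, hWsup, codisjoint_iff.mp hC.codisjoint]
    have hcompl1 : IsCompl V (V' ⊔ C) := key V V' hdisj le_sup_left le_sup_right rfl
    have hcompl2 : IsCompl V' (V ⊔ C) :=
      key V' V (by rw [inf_comm, hdisj]) le_sup_right le_sup_left (sup_comm V' V)
    have e1 : (↥A) ≃ₗ[R] ↥(V' ⊔ C) :=
      (quotientEquivOfIsCompl V A hAV.symm).symm.trans (quotientEquivOfIsCompl V _ hcompl1)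
    have e2 : (↥A') ≃ₗ[R] ↥(V ⊔ C) :=
      (quotientEquivOfIsCompl V' A' hA'V'.symm).symm.trans (quotientEquivOfIsCompl V' _ hcompl2)
    have e3 : (↥(V' ⊔ C)) ≃ₗ[R] ↥(V ⊔ C) :=
      ((supEquivProd V' C hV'C).symm.trans
        ((LinearEquiv.prodCongr e.symm (LinearEquiv.refl R C)))).trans (supEquivProd V C hVC)
    exact ⟨(e1.trans e3).trans e2.symm⟩

/-- One-step cancellation across an isomorphism of semisimple modules. -/
theorem onestep' [IsSemisimpleModule R M] (ψ : M ≃ₗ[R] M')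
    (A V : Submodule R M) (A' V' : Submodule R M')
    (hAV : IsCompl A V) (hA'V' : IsCompl A' V')
    (hV : IsSimpleModule R V) (hV' : IsSimpleModule R V') (e : V ≃ₗ[R] V') :
    Nonempty (A ≃ₗ[R] A') := by
  set A'' := map (ψ.symm : M' →ₗ[R] M) A' with hA''
  set V'' := map (ψ.symm : M' →ₗ[R] M) V' with hV''
  have hcompl : IsCompl A'' V'' := by
    have := (Submodule.orderIsoMapComap ψ.symm).isCompl hA'V'
    simpa [Submodule.orderIsoMapComap] using this
  have eA : (↥A') ≃ₗ[R] ↥A'' := ψ.symm.submoduleMap A'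
  have eV : (↥V') ≃ₗ[R] ↥V'' := ψ.symm.submoduleMap V'
  have hV'' : IsSimpleModule R V'' := IsSimpleModule.congr eV.symm
  obtain ⟨θ⟩ := onestep A V A'' V'' hAV hcompl hV hV'' (e.trans eV)
  exact ⟨θ.trans eA.symm⟩

/-- Cancellation for semisimple modules: complements of isomorphic submodules
are isomorphic (finite length via `IsArtinian`). -/
theorem cancel [IsSemisimpleModule R M] [IsSemisimpleModule R M'] [IsArtinian R M]
    (Ψ : M ≃ₗ[R] M') (B : Submodule R M) :
    ∀ (A : Submodule R M) (A' B' : Submodule R M'), IsCompl A B → IsCompl A' B' →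
      (↥B ≃ₗ[R] ↥B') → Nonempty (↥A ≃ₗ[R] ↥A') := by
  induction B using WellFoundedLT.induction with
  | _ B ih =>
  intro A A' B' hAB hA'B' φ
  rcases IsSemisimpleModule.eq_bot_or_exists_simple_le B with hB | ⟨V, hVB, hVsimple⟩
  · subst hB
    have hB' : B' = ⊥ := by
      have : Subsingleton (↥B') := Equiv.subsingleton φ.symm.toEquiv
      rw [eq_bot_iff]
      intro z hz
      have : (⟨z, hz⟩ : ↥B') = ⟨0, B'.zero_mem⟩ := Subsingleton.elim _ _
      simpa using congrArg Subtype.val this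
    subst hB'
    have hA : A = ⊤ := by simpa using codisjoint_iff.mp hAB.codisjoint
    have hA' : A' = ⊤ := by simpa using codisjoint_iff.mp hA'B'.codisjoint
    subst hA; subst hA'
    exact ⟨(Submodule.topEquiv.trans Ψ).trans Submodule.topEquiv.symm⟩
  · -- split off the simple V from B
    obtain ⟨C', hC'⟩ := exists_isCompl V
    set W := C' ⊓ B with hW
    have hWB : W ≤ B := inf_le_right
    have hVW_bot : V ⊓ W = ⊥ := by
      rw [hW, ← inf_assoc, disjoint_iff.mp hC'.disjoint, bot_inf_eq]
    have hVW_sup : V ⊔ W = B := by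
      rw [hW, sup_comm, inf_comm C' B, inf_sup_assoc_of_le _ hVB, sup_comm C' V,
        codisjoint_iff.mp hC'.codisjoint, inf_top_eq]
    have hVbot : V ≠ ⊥ := (isSimpleModule_iff_isAtom.mp hVsimple).1
    have hWlt : W < B := by
      rcases lt_or_eq_of_le hWB with h | h
      · exact h
      · exfalso; apply hVbot
        rw [← hVW_bot, h, inf_eq_left.mpr hVB]
    -- transport V, W over to B' via φ
    set g : (↥B) →ₗ[R] M' := B'.subtype ∘ₗ (φ : ↥B →ₗ[R] ↥B') with hg
    have hginj : Function.Injective ⇑g := by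
      rw [hg]
      exact (Submodule.injective_subtype B').comp φ.injective
    have hrange : LinearMap.range g = B' := by
      rw [hg, LinearMap.range_comp, LinearEquiv.range, Submodule.map_top, range_subtype]
    set Vb := comap B.subtype V with hVb
    set Wb := comap B.subtype W with hWb
    have hVbWb_sup : Vb ⊔ Wb = ⊤ := comap_subtype_sup_eq_top hVB hWB hVW_sup
    have hVbWb_bot : Vb ⊓ Wb = ⊥ := by
      rw [hVb, hWb, ← comap_inf, hVW_bot, comap_bot, ker_subtype]
    set V' := map g Vb with hV'
    set W' := map g Wb with hW'
    have hV'W'_sup : V' ⊔ W' = B' := by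
      rw [hV', hW', ← Submodule.map_sup, hVbWb_sup, Submodule.map_top, hrange]
    have hV'W'_bot : V' ⊓ W' = ⊥ := by
      rw [hV', hW', ← Submodule.map_inf g hginj, hVbWb_bot, Submodule.map_bot]
    have hV'B' : V' ≤ B' := hV'W'_sup ▸ le_sup_left
    have hW'B' : W' ≤ B' := hV'W'_sup ▸ le_sup_right
    have eV : (↥V) ≃ₗ[R] ↥V' :=
      (comapSubtypeEquivOfLe hVB).symm.trans (equivMapOfInjective g hginj Vb)
    have eW : (↥W) ≃ₗ[R] ↥W' :=
      (comapSubtypeEquivOfLe hWB).symm.trans (equivMapOfInjective g hginj Wb)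
    have hV'simple : IsSimpleModule R V' := IsSimpleModule.congr eV.symm
    -- new complements
    have hnew : IsCompl (A ⊔ V) W := by
      constructor
      · rw [disjoint_iff]
        have h1 : (A ⊔ V) ⊓ B = V := by
          rw [sup_comm A V, sup_inf_assoc_of_le _ hVB, disjoint_iff.mp hAB.disjoint,
            sup_bot_eq]
        have : (A ⊔ V) ⊓ W = ((A ⊔ V) ⊓ B) ⊓ W := by
          rw [inf_assoc, inf_eq_right.mpr hWB]
        rw [this, h1, hVW_bot]
      · rw [codisjoint_iff, sup_assoc, hVW_sup, codisjoint_iff.mp hAB.codisjoint]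
    have hnew' : IsCompl (A' ⊔ V') W' := by
      constructor
      · rw [disjoint_iff]
        have h1 : (A' ⊔ V') ⊓ B' = V' := by
          rw [sup_comm A' V', sup_inf_assoc_of_le _ hV'B', disjoint_iff.mp hA'B'.disjoint,
            sup_bot_eq]
        have : (A' ⊔ V') ⊓ W' = ((A' ⊔ V') ⊓ B') ⊓ W' := by
          rw [inf_assoc, inf_eq_right.mpr hW'B']
        rw [this, h1, hV'W'_bot]
      · rw [codisjoint_iff, sup_assoc, hV'W'_sup, codisjoint_iff.mp hA'B'.codisjoint]
    obtain ⟨ρ⟩ := ih W hWlt (A ⊔ V) (A' ⊔ V') W' hnew.symm.symm hnew' eW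
    -- now cancel the simple V inside A ⊔ V ≃ A' ⊔ V'
    have hAV_bot : A ⊓ V = ⊥ := by
      rw [← le_bot_iff]
      calc A ⊓ V ≤ A ⊓ B := inf_le_inf_left A hVB
      _ = ⊥ := disjoint_iff.mp hAB.disjoint
    have hA'V'_bot : A' ⊓ V' = ⊥ := by
      rw [← le_bot_iff]
      calc A' ⊓ V' ≤ A' ⊓ B' := inf_le_inf_left A' hV'B'
      _ = ⊥ := disjoint_iff.mp hA'B'.disjoint
    have hcompl1 : IsCompl (comap (A ⊔ V).subtype A) (comap (A ⊔ V).subtype V) :=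
      isCompl_comap_subtype le_sup_left le_sup_right hAV_bot rfl
    have hcompl2 : IsCompl (comap (A' ⊔ V').subtype A') (comap (A' ⊔ V').subtype V') :=
      isCompl_comap_subtype le_sup_left le_sup_right hA'V'_bot rfl
    have hVsimple1 : IsSimpleModule R (comap (A ⊔ V).subtype V) :=
      IsSimpleModule.congr (comapSubtypeEquivOfLe le_sup_right)
    have hVsimple2 : IsSimpleModule R (comap (A' ⊔ V').subtype V') :=
      IsSimpleModule.congr (comapSubtypeEquivOfLe le_sup_right)
    have eee : (↥(comap (A ⊔ V).subtype V)) ≃ₗ[R] ↥(comap (A' ⊔ V').subtype V') :=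
      ((comapSubtypeEquivOfLe le_sup_right).trans eV).trans
        (comapSubtypeEquivOfLe le_sup_right).symm
    obtain ⟨τ⟩ := onestep' ρ _ _ _ _ hcompl1 hcompl2 hVsimple1 hVsimple2 eee
    exact ⟨((comapSubtypeEquivOfLe (le_sup_left : A ≤ A ⊔ V)).symm.trans τ).trans
      (comapSubtypeEquivOfLe (le_sup_left : A' ≤ A' ⊔ V'))⟩


theorem magic {S : Type*} [Ring S] (a b x t s : S)
    (hreg : a*x*a = a) (h2 : a*x*t = 0) (h3 : t*x*a = 0) (h4 : x*a*s = 0)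
    (h5 : s*a*x = 0) (h8 : t*s = 1 - a*x) (h9 : s*t = 1 - x*a) :
    (x*a*x + s - x*a*x*(1-a*b)*t*s) * (a + (1-a*b)*t) = 1 ∧
    (a + (1-a*b)*t) * (x*a*x + s - x*a*x*(1-a*b)*t*s) = 1 := by
  have h6 : s*a = 0 := by
    calc s*a = s*(a*x*a) := by rw [hreg]
    _ = s*a*x*a := by rw [← mul_assoc, ← mul_assoc]
    _ = 0 := by rw [h5, zero_mul]
  have h7 : a*s = 0 := by
    calc a*s = a*x*a*s := by rw [hreg]
    _ = a*(x*a*s) := by rw [mul_assoc, mul_assoc, ← mul_assoc x a s]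
    _ = 0 := by rw [h4, mul_zero]
  have w1 : ∀ u : S, a*(x*(a*u)) = a*u := by
    intro u; rw [← mul_assoc, ← mul_assoc, hreg]
  have w2 : ∀ u : S, a*(x*(t*u)) = 0 := by
    intro u; rw [← mul_assoc, ← mul_assoc, h2, zero_mul]
  have w3 : ∀ u : S, t*(x*(a*u)) = 0 := by
    intro u; rw [← mul_assoc, ← mul_assoc, h3, zero_mul]
  have w4 : ∀ u : S, x*(a*(s*u)) = 0 := by
    intro u; rw [← mul_assoc, ← mul_assoc, h4, zero_mul]
  have w6 : ∀ u : S, s*(a*u) = 0 := by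
    intro u; rw [← mul_assoc, h6, zero_mul]
  have w7 : ∀ u : S, a*(s*u) = 0 := by
    intro u; rw [← mul_assoc, h7, zero_mul]
  have w8 : ∀ u : S, t*(s*u) = u - a*(x*u) := by
    intro u; rw [← mul_assoc, h8, sub_mul, one_mul, mul_assoc]
  have w9 : ∀ u : S, s*(t*u) = u - x*(a*u) := by
    intro u; rw [← mul_assoc, h9, sub_mul, one_mul, mul_assoc]
  have w1t : a*(x*a) = a := by rw [← mul_assoc, hreg]
  have w2t : a*(x*t) = 0 := by rw [← mul_assoc, h2]
  have w3t : t*(x*a) = 0 := by rw [← mul_assoc, h3]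
  have w4t : x*(a*s) = 0 := by rw [← mul_assoc, h4]
  have w5t : s*(a*x) = 0 := by rw [← mul_assoc, h5]
  constructor
  · simp only [mul_add, add_mul, mul_sub, sub_mul, mul_one, one_mul, mul_assoc,
      w1, w2, w3, w4, w6, w7, w8, w9, w1t, w2t, w3t, w4t, w5t, hreg, h2, h3, h4, h5, h6, h7, h8, h9,
      mul_zero, zero_mul, sub_zero, zero_sub, add_zero, zero_add, neg_mul, mul_neg, neg_neg, neg_zero]
    abel
  · simp only [mul_add, add_mul, mul_sub, sub_mul, mul_one, one_mul, mul_assoc,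
      w1, w2, w3, w4, w6, w7, w8, w9, w1t, w2t, w3t, w4t, w5t, hreg, h2, h3, h4, h5, h6, h7, h8, h9,
      mul_zero, zero_mul, sub_zero, zero_sub, add_zero, zero_add, neg_mul, mul_neg, neg_neg, neg_zero]
    abel

section ring
variable {S : Type*} [Ring S]

variable {S : Type*} [Ring S]

/-- membership in a principal left ideal. -/
theorem mem_span_mul {g z : S} : z ∈ Submodule.span S {g} ↔ ∃ c, c * g = z := by
  simpa [smul_eq_mul] using Submodule.mem_span_singleton (R := S) (M := S) (y := g)

theorem vonNeumann [IsSemisimpleRing S] (a : S) : ∃ x, a * x * a = a := by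
  obtain ⟨T, hT⟩ := exists_isCompl (Submodule.span S {a})
  have h1 : (1 : S) ∈ Submodule.span S {a} ⊔ T := by
    rw [codisjoint_iff.mp hT.codisjoint]; trivial
  obtain ⟨p, hp, q, hq, hpq⟩ := mem_sup.mp h1
  obtain ⟨x, hx⟩ := mem_span_mul.mp hp
  have hpq' : a * p + a * q = a := by rw [← mul_add, hpq, mul_one]
  have haq : a * q ∈ Submodule.span S {a} ⊓ T := by
    constructor
    · have h2 : a * q = a - a * p := eq_sub_of_add_eq' hpq'
      rw [h2]
      exact sub_mem (mem_span_singleton_self a)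
        (by simpa [smul_eq_mul] using Submodule.smul_mem _ a hp)
    · simpa [smul_eq_mul] using T.smul_mem a hq
  rw [disjoint_iff.mp hT.disjoint] at haq
  have haq0 : a * q = 0 := haq
  have hap : a * p = a := by rw [haq0, add_zero] at hpq'; exact hpq'
  refine ⟨x, ?_⟩
  rw [mul_assoc, hx, hap]

/-- For an idempotent e, span{1-e} and span{e} are complementary left ideals. -/
theorem isCompl_span_idem {e : S} (he : e * e = e) :
    IsCompl (Submodule.span S {1 - e}) (Submodule.span S {e}) := by
  constructor
  · rw [disjoint_iff, eq_bot_iff]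
    rintro z ⟨hz1, hz2⟩
    obtain ⟨c, hc⟩ := mem_span_mul.mp hz1
    obtain ⟨d, hd⟩ := mem_span_mul.mp hz2
    have h1 : z * e = z := by rw [← hd, mul_assoc, he]
    have h2 : z * e = 0 := by
      rw [← hc, mul_assoc, sub_mul, one_mul, he, sub_self, mul_zero]
    rw [mem_bot, ← h1, h2]
  · rw [codisjoint_iff, eq_top_iff]
    intro z _
    have : z = z * (1 - e) + z * e := by rw [mul_sub, mul_one]; abel
    rw [this]
    exact add_mem (mem_sup_left (mem_span_mul.mpr ⟨z, rfl⟩))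
      (mem_sup_right (mem_span_mul.mpr ⟨z, rfl⟩))

/-- In a semisimple ring, for every `a b` there is `t` with `a + (1-ab)t` a unit. -/
theorem exists_unit_sr {S : Type*} [Ring S] [IsSemisimpleRing S] (a b : S) :
    ∃ t : S, ∃ z : S, z * (a + (1 - a * b) * t) = 1 ∧ (a + (1 - a * b) * t) * z = 1 := by
  obtain ⟨x, hreg⟩ := vonNeumann a
  have he : (a * x) * (a * x) = a * x := by rw [← mul_assoc, hreg]
  have hf : (x * a) * (x * a) = x * a := by rw [mul_assoc, ← mul_assoc a x a, hreg]
  -- the isomorphism span{e} ≃ span{f}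
  have eBe : (↥(Submodule.span S {a * x})) ≃ₗ[S] ↥(Submodule.span S {x * a}) := by
    refine
    { toFun := fun z => ⟨z.val * a, mem_span_mul.mpr ⟨z.val * a, by rw [mul_assoc, ← mul_assoc a x a, hreg]⟩⟩
      map_add' := fun z w => by ext; simp [add_mul]
      map_smul' := fun c z => by ext; simp [smul_eq_mul, mul_assoc]
      invFun := fun y => ⟨y.val * x, ?_⟩
      left_inv := fun z => ?_
      right_inv := fun y => ?_ }
    · obtain ⟨c, hc⟩ := mem_span_mul.mp y.property
      refine mem_span_mul.mpr ⟨y.val * x, ?_⟩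
      have hyf : y.val * (x * a) = y.val := by rw [← hc, mul_assoc, hf]
      calc y.val * x * (a * x) = y.val * (x * a) * x := by
            rw [mul_assoc, mul_assoc, mul_assoc]
      _ = y.val * x := by rw [hyf]
    · obtain ⟨c, hc⟩ := mem_span_mul.mp z.property
      have hze : z.val * (a * x) = z.val := by rw [← hc, mul_assoc, he]
      ext
      show z.val * a * x = z.val
      rw [mul_assoc, hze]
    · obtain ⟨c, hc⟩ := mem_span_mul.mp y.property
      have hyf : y.val * (x * a) = y.val := by rw [← hc, mul_assoc, hf]
      ext
      show y.val * x * a = y.val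
      rw [mul_assoc, hyf]
  have h1e : (1 - a * x) * (1 - a * x) = 1 - a * x := by
    simp [mul_sub, sub_mul, he]
  have h1f : (1 - x * a) * (1 - x * a) = 1 - x * a := by
    simp [mul_sub, sub_mul, hf]
  obtain ⟨θ⟩ := cancel (LinearEquiv.refl S S) (Submodule.span S {a * x})
    (Submodule.span S {1 - a * x}) (Submodule.span S {1 - x * a}) (Submodule.span S {x * a})
    (isCompl_span_idem he) (isCompl_span_idem hf) eBe
  have memE : (1 - a*x) ∈ Submodule.span S {1 - a*x} := mem_span_singleton_self _
  have memF : (1 - x*a) ∈ Submodule.span S {1 - x*a} := mem_span_singleton_self _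
  set t : S := ((θ ⟨1 - a*x, memE⟩ : ↥(Submodule.span S {1 - x*a})) : S) with ht
  set s : S := ((θ.symm ⟨1 - x*a, memF⟩ : ↥(Submodule.span S {1 - a*x})) : S) with hs
  have hEt : (1 - a*x) * t = t := by
    have h1 : ((1 - a*x) • (⟨1 - a*x, memE⟩ : ↥(Submodule.span S {1 - a*x})))
        = ⟨1 - a*x, memE⟩ := by
      ext; simp only [SetLike.val_smul, smul_eq_mul]; exact h1e
    have h2 := congrArg (fun v => ((θ v : ↥(Submodule.span S {1 - x*a})) : S)) h1
    simp only [map_smul, SetLike.val_smul, smul_eq_mul] at h2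
    exact h2
  have hFs : (1 - x*a) * s = s := by
    have h1 : ((1 - x*a) • (⟨1 - x*a, memF⟩ : ↥(Submodule.span S {1 - x*a})))
        = ⟨1 - x*a, memF⟩ := by
      ext; simp only [SetLike.val_smul, smul_eq_mul]; exact h1f
    have h2 := congrArg (fun v => ((θ.symm v : ↥(Submodule.span S {1 - a*x})) : S)) h1
    simp only [map_smul, SetLike.val_smul, smul_eq_mul] at h2
    exact h2
  have htF : t * (1 - x*a) = t := by
    obtain ⟨c, hc⟩ := mem_span_mul.mp (θ ⟨1 - a*x, memE⟩).property
    rw [ht, ← hc, mul_assoc, h1f]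
  have hsE : s * (1 - a*x) = s := by
    obtain ⟨c, hc⟩ := mem_span_mul.mp (θ.symm ⟨1 - x*a, memF⟩).property
    rw [hs, ← hc, mul_assoc, h1e]
  have hts : t * s = 1 - a*x := by
    have h1 : (t • (⟨1 - x*a, memF⟩ : ↥(Submodule.span S {1 - x*a})))
        = θ ⟨1 - a*x, memE⟩ := by
      ext; simp only [SetLike.val_smul, smul_eq_mul]; exact htF
    have h2 := congrArg (fun v => ((θ.symm v : ↥(Submodule.span S {1 - a*x})) : S)) h1
    simp only [map_smul, SetLike.val_smul, smul_eq_mul, LinearEquiv.symm_apply_apply] at h2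
    exact h2
  have hst : s * t = 1 - x*a := by
    have h1 : (s • (⟨1 - a*x, memE⟩ : ↥(Submodule.span S {1 - a*x})))
        = θ.symm ⟨1 - x*a, memF⟩ := by
      ext; simp only [SetLike.val_smul, smul_eq_mul]; exact hsE
    have h2 := congrArg (fun v => ((θ v : ↥(Submodule.span S {1 - x*a})) : S)) h1
    simp only [map_smul, SetLike.val_smul, smul_eq_mul, LinearEquiv.apply_symm_apply] at h2
    exact h2
  -- convert to plain relations
  have r2 : a*x*t = 0 := by
    have := hEt; rw [sub_mul, one_mul] at this; exact sub_eq_self.mp this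
  have r3 : t*x*a = 0 := by
    have := htF; rw [mul_sub, mul_one] at this
    have h0 : t * (x*a) = 0 := sub_eq_self.mp this
    rw [← mul_assoc] at h0; exact h0
  have r4 : x*a*s = 0 := by
    have := hFs; rw [sub_mul, one_mul] at this; exact sub_eq_self.mp this
  have r5 : s*a*x = 0 := by
    have := hsE; rw [mul_sub, mul_one] at this
    have h0 : s * (a*x) = 0 := sub_eq_self.mp this
    rw [← mul_assoc] at h0; exact h0
  obtain ⟨hz1, hz2⟩ := magic a b x t s hreg r2 r3 r4 r5 hts hst
  exact ⟨t, x*a*x + s - x*a*x*(1-a*b)*t*s, hz1, hz2⟩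

end ring


/-- Elements congruent to 1 mod the Jacobson radical are units (noncommutative). -/
theorem jac_unit {R : Type*} [Ring R] (y : R) (h : y - 1 ∈ Ideal.jacobson (⊥ : Ideal R)) :
    IsUnit y := by
  obtain ⟨s₁, hs₁⟩ := Ideal.exists_mul_sub_mem_of_sub_one_mem_jacobson y h
  rw [Ideal.mem_bot, sub_eq_zero] at hs₁
  have hs₁J : s₁ - 1 ∈ Ideal.jacobson (⊥ : Ideal R) := by
    have h2 : s₁ - 1 = s₁ * (1 - y) + (s₁ * y - 1) := by noncomm_ring
    rw [h2, hs₁, sub_self, add_zero, ← neg_sub y 1, mul_neg]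
    exact neg_mem (Ideal.mul_mem_left _ s₁ h)
  obtain ⟨s₂, hs₂⟩ := Ideal.exists_mul_sub_mem_of_sub_one_mem_jacobson s₁ hs₁J
  rw [Ideal.mem_bot, sub_eq_zero] at hs₂
  have hy : y = s₂ := by
    calc y = (s₂ * s₁) * y := by rw [hs₂, one_mul]
    _ = s₂ * (s₁ * y) := by rw [mul_assoc]
    _ = s₂ := by rw [hs₁, mul_one]
  exact ⟨⟨y, s₁, by rw [hy, hs₂], hs₁⟩, rfl⟩

theorem main {R : Type*} [Ring R]
    (hss : IsSemisimpleModule R (R ⧸ (Ideal.jacobson (⊥ : Ideal R))))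
    (a b : R) : ∃ (u : Rˣ) (r : R), (u : R) = a + (1 - a * b) * r := by
  set J : Ideal R := Ideal.jacobson (⊥ : Ideal R) with hJ
  have hJr : ∀ (x y : R), x ∈ J → x * y ∈ J := by
    intro x y hx
    exact J.mul_mem_right y hx
  -- two-sided ideal structure, congruence and quotient ring
  let I2 : TwoSidedIdeal R := TwoSidedIdeal.mk' (J : Set R) J.zero_mem
    (fun ha hb => J.add_mem ha hb) (fun ha => J.neg_mem ha)
    (fun ha => J.mul_mem_left _ ha) (fun ha => hJr _ _ ha)
  let c : RingCon R := I2.ringCon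
  let S := c.Quotient
  have hc : ∀ x y : R, c x y ↔ x - y ∈ J := by
    intro x y
    rw [I2.rel_iff x y]
    exact TwoSidedIdeal.mem_mk' _ _ _ _ _ _ _
  have hcoe : ∀ x y : R, (x : S) = (y : S) ↔ x - y ∈ J := by
    intro x y; rw [c.eq, hc]
  -- transfer semisimplicity
  have hsurj : Function.Surjective ⇑(c.mk' : R →+* S) := Quotient.mk''_surjective
  have : RingHomSurjective (c.mk' : R →+* S) := ⟨hsurj⟩
  let l : (R ⧸ J) →ₛₗ[(c.mk' : R →+* S)] S :=
    { toFun := fun q => Quotient.liftOn' q (fun y => (y : S)) (by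
        intro y z h
        have h' : y - z ∈ J := by
          rwa [Submodule.quotientRel_def] at h
        exact (hcoe y z).mpr h')
      map_add' := by
        rintro ⟨y⟩ ⟨z⟩
        exact (c.coe_add y z)
      map_smul' := by
        rintro r ⟨y⟩
        exact (c.coe_mul r y) }
  have hlbij : Function.Bijective ⇑l := by
    constructor
    · rintro ⟨y⟩ ⟨z⟩ h
      have h' : (y : S) = (z : S) := h
      rw [hcoe] at h'
      exact (Submodule.Quotient.eq J).mpr h'
    · intro z
      obtain ⟨y, rfl⟩ := hsurj z
      exact ⟨Submodule.Quotient.mk y, rfl⟩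
  have hS : IsSemisimpleRing S := (l.isSemisimpleModule_iff_of_bijective hlbij).mp hss
  -- apply the semisimple result
  obtain ⟨t, z, hz1, hz2⟩ := exists_unit_sr ((a : R) : S) ((b : R) : S)
  obtain ⟨t₀, ht₀⟩ := hsurj t
  obtain ⟨z₀, hz₀⟩ := hsurj z
  have ht₀' : ((t₀ : R) : S) = t := ht₀
  have hz₀' : ((z₀ : R) : S) = z := hz₀
  set w : R := a + (1 - a * b) * t₀ with hw
  have hwS : ((w : R) : S) = (a : S) + (1 - (a:S) * (b:S)) * t := by
    rw [hw]
    calc ((a + (1 - a*b)*t₀ : R) : S) = (a:S) + ((1 - a*b : R) : S) * ((t₀ : R) : S) := by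
          rw [c.coe_add, c.coe_mul]
    _ = (a:S) + (1 - (a:S)*(b:S)) * ((t₀ : R) : S) := by rw [c.coe_sub, c.coe_one, c.coe_mul]
    _ = (a:S) + (1 - (a:S)*(b:S)) * t := by rw [ht₀']
  have h1 : z₀ * w - 1 ∈ J := by
    rw [← hcoe (z₀ * w) 1]
    calc ((z₀ * w : R) : S) = (z₀ : S) * ((w : R) : S) := c.coe_mul z₀ w
    _ = z * ((a : S) + (1 - (a:S) * (b:S)) * t) := by rw [hz₀', hwS]
    _ = 1 := hz1
    _ = ((1 : R) : S) := (c.coe_one).symm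
  have h2 : w * z₀ - 1 ∈ J := by
    rw [← hcoe (w * z₀) 1]
    calc ((w * z₀ : R) : S) = ((w : R) : S) * (z₀ : S) := c.coe_mul w z₀
    _ = ((a : S) + (1 - (a:S) * (b:S)) * t) * z := by rw [hz₀', hwS]
    _ = 1 := hz2
    _ = ((1 : R) : S) := (c.coe_one).symm
  have hu1 : IsUnit (z₀ * w) := jac_unit _ h1
  have hu2 : IsUnit (w * z₀) := jac_unit _ h2
  -- combine into a unit w
  obtain ⟨α, hα⟩ := hu1
  obtain ⟨β, hβ⟩ := hu2
  have hL : ((α⁻¹ : Rˣ) : R) * z₀ * w = 1 := by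
    rw [mul_assoc, ← hα]; exact α.inv_mul
  have hR : w * (z₀ * ((β⁻¹ : Rˣ) : R)) = 1 := by
    rw [← mul_assoc, ← hβ]; exact β.mul_inv
  have hLR : ((α⁻¹ : Rˣ) : R) * z₀ = z₀ * ((β⁻¹ : Rˣ) : R) :=
    left_inv_eq_right_inv hL hR
  refine ⟨⟨w, z₀ * ((β⁻¹ : Rˣ) : R), hR, ?_⟩, t₀, rfl⟩
  rw [← hLR]
  exact hL

end BassAux

/-- Bass's stable-range-type lemma: if `R/rad R` is semisimple (e.g. `R` left Artinian),
then for all `a b ∈ R` there exist a unit `u` and `r ∈ R` with `u = a + (1 − ab)r`. -/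
theorem exists_unit_add_one_sub_mul {R : Type*} [Ring R]
    (hss : IsSemisimpleModule R (R ⧸ (Ideal.jacobson (⊥ : Ideal R))))
    (a b : R) : ∃ (u : Rˣ) (r : R), (u : R) = a + (1 - a * b) * r := by
  exact BassAux.main hss a b
end

section
/- Let R be a ring, M a left R-module, and A ⊆ M a subgroup of the additive group of M. Then A is an R-submodule of M if and only if its annihilator Γ(A) = {χ ∈ M̂ : χ|_A ≡ 1} is an R-submodule of the right R-module M̂ = Hom(M, 𝕋), where (χr)(x) = χ(rx). -/
/-!
The forward direction is immediate. For the converse, if `r • a ∉ A` then `M ⧸ A` has a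
`ℚ/ℤ`-valued character not vanishing at the class of `r • a`; embedding `ℚ/ℤ` into the circle
turns it into a character of `M` that is trivial on `A` but not at `r • a`.
-/

namespace AddCircle

noncomputable def ratToReal : AddCircle (1 : ℚ) →+ AddCircle (1 : ℝ) :=
  QuotientAddGroup.map _ _ (Rat.castHom ℝ).toAddMonoidHom <| by
    rintro _ ⟨n, rfl⟩
    exact ⟨n, by simp⟩

theorem ratToReal_injective : Function.Injective ratToReal := by
  refine (injective_iff_map_eq_zero _).mpr fun x hx => ?_
  induction x using QuotientAddGroup.induction_on with
  | H q =>
    obtain ⟨n, hn⟩ := (coe_eq_zero_iff (1 : ℝ)).mp hx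
    exact (coe_eq_zero_iff (1 : ℚ)).mpr ⟨n, by simp at hn ⊢; exact_mod_cast hn⟩

noncomputable def ratToCircle : AddChar (AddCircle (1 : ℚ)) Circle :=
  toCircle_addChar.compAddMonoidHom ratToReal

theorem ratToCircle_injective : Function.Injective ratToCircle :=
  (injective_toCircle one_ne_zero).comp ratToReal_injective

theorem ratToCircle_eq_one_iff {x : AddCircle (1 : ℚ)} : ratToCircle x = 1 ↔ x = 0 :=
  ratToCircle_injective.eq_iff' (AddChar.map_zero_eq_one _)

end AddCircle

theorem AddSubgroup.mem_of_forall_addChar_eq_one {M : Type*} [AddCommGroup M] {A : AddSubgroup M}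
    {m : M} (h : ∀ χ : AddChar M Circle, (∀ a ∈ A, χ a = 1) → χ m = 1) : m ∈ A := by
  by_contra hm
  obtain ⟨c, hc⟩ := CharacterModule.exists_character_apply_ne_zero_of_ne_zero
    (a := (m : M ⧸ A)) (by simpa using hm)
  let χ : AddChar M Circle := (AddCircle.ratToCircle.compAddMonoidHom c).compAddMonoidHom
    (QuotientAddGroup.mk' A)
  have hχA : ∀ a ∈ A, χ a = 1 := fun a ha => by
    change AddCircle.ratToCircle (c (a : M ⧸ A)) = 1
    rw [AddCircle.ratToCircle_eq_one_iff, (QuotientAddGroup.eq_zero_iff a).mpr ha, map_zero]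
  exact hc (AddCircle.ratToCircle_eq_one_iff.mp (h χ hχA))

/-- A subgroup `A` of a left `R`-module `M` is an `R`-submodule if and only if its
annihilator `Γ(A) = {χ ∈ M̂ : χ|_A ≡ 1}` is a submodule of the right `R`-module
`M̂ = Hom(M, 𝕋)`, whose action is `(χ·r)(x) = χ(r•x)`. -/
theorem addSubgroup_smul_closed_iff_annihilator_smul_closed {R M : Type*} [Ring R]
    [AddCommGroup M] [Module R M] (A : AddSubgroup M) :
    (∀ (r : R), ∀ a ∈ A, r • a ∈ A) ↔
      (∀ χ : AddChar M Circle, (∀ a ∈ A, χ a = 1) →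
        ∀ (r : R), ∀ a ∈ A, χ (r • a) = 1) :=
  ⟨fun hA _ hχ r a ha => hχ _ (hA r a ha),
    fun h r a ha => AddSubgroup.mem_of_forall_addChar_eq_one fun χ hχ => h χ hχ r a ha⟩
end

section
/- Let R be a left Artinian ring admitting a finitarily left torsion-free character χ : R → 𝕋 (a character whose kernel contains no nonzero finite left ideal). Then for every nonzero finite left ideal I of R there exists r ∈ R with χ(rI) ≠ {1}; in particular the map soc*(R) → Hom(E, 𝕋) constructed via a surjection h : R → E × U with kernel rad R (E finite semisimple, U semisimple without nontrivial finite left modules) is injective, where a ↦ (the character e ↦ χ(ra) induced on E). -/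
/-!
The finite left ideals form a directed family (closed under `⊔`), so every element of the
finitary socle lies in a finite left ideal `J`. If `a, b ∈ soc*(R)` give the same character
`r ↦ χ(r a) = χ(r b)`, then `χ` vanishes on the left ideal `R (a - b) ⊆ J`, which is finite,
so it is zero by torsion-freeness.
-/

namespace Submodule

variable {R M : Type*} [Semiring R] [AddCommMonoid M] [Module R M]

theorem finite_coe_sup {N N' : Submodule R M} (hN : Finite N) (hN' : Finite N') :
    Finite (N ⊔ N' : Submodule R M) := by
  have : ((N ⊔ N' : Submodule R M) : Set M).Finite := by
    rw [coe_sup]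
    exact (Set.toFinite (N : Set M)).add (Set.toFinite (N' : Set M))
  exact this.to_subtype

theorem exists_finite_of_mem_sSup_finite {x : M}
    (hx : x ∈ sSup {N : Submodule R M | Finite N}) :
    ∃ N : Submodule R M, Finite N ∧ x ∈ N := by
  refine (mem_sSup_of_directed ⟨⊥, ?_⟩ ?_).mp hx
  · exact (inferInstance : Finite (⊥ : Submodule R M))
  · exact fun N hN N' hN' => ⟨N ⊔ N', finite_coe_sup hN hN', le_sup_left, le_sup_right⟩

end Submodule

theorem AddChar.eq_zero_of_mul_mem_ker {R : Type*} [Ring R] {χ : AddChar R Circle}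
    (hχ : ∀ I : Ideal R, Finite I → (∀ x ∈ I, χ x = 1) → I = ⊥)
    {J : Ideal R} (hJ : Finite J) {x : R} (hxJ : x ∈ J) (hx : ∀ r, χ (r * x) = 1) : x = 0 := by
  have hspan : Ideal.span {x} ≤ J := (Ideal.span_singleton_le_iff_mem J).mpr hxJ
  have : Ideal.span {x} = ⊥ := hχ _ (Finite.of_injective _ (Submodule.inclusion_injective hspan))
    fun y hy => by
      obtain ⟨r, rfl⟩ := Ideal.mem_span_singleton'.mp hy
      exact hx r
  simpa using this

theorem finitarily_torsion_free_character_injective_on_finsocle_general {R : Type*} [Ring R]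
    (χ : AddChar R Circle)
    (hχ : ∀ I : Ideal R, Finite I → (∀ x ∈ I, χ x = 1) → I = ⊥) :
    (∀ I : Ideal R, I ≠ ⊥ → Finite I → ∃ r : R, ∃ x ∈ I, χ (r * x) ≠ 1) ∧
    Function.Injective
      (fun a : (sSup {I : Ideal R | IsAtom I ∧ Finite I} : Ideal R) =>
        fun r : R => χ (r * (a : R))) := by
  refine ⟨fun I hI hfin => ?_, fun a b hab => ?_⟩
  · by_contra! h
    exact hI (hχ I hfin fun x hx => by simpa using h 1 x hx)
  · have hmem : (a - b : R) ∈ sSup {I : Ideal R | Finite I} :=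
      sSup_le_sSup (fun _ hI => hI.2 : {I : Ideal R | IsAtom I ∧ Finite I} ⊆ _)
        (sub_mem a.2 b.2)
    obtain ⟨J, hJ, hJmem⟩ := Submodule.exists_finite_of_mem_sSup_finite hmem
    have hker : ∀ r, χ (r * (a - b)) = 1 := fun r => by
      have hr : χ (r * a) = χ (r * b) := congrFun hab r
      rw [mul_sub, AddChar.map_sub_eq_div, hr, div_self']
    exact Subtype.ext (sub_eq_zero.mp (AddChar.eq_zero_of_mul_mem_ker hχ hJ hJmem hker))

/-- Let `R` be a left Artinian ring with a finitarily left torsion-free character `χ`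
(a character of the additive group of `R` whose kernel contains no nonzero finite left
ideal).  Then every nonzero finite left ideal `I` admits `r ∈ R` with `χ(rI) ≠ {1}`; in
particular the map from the finitary left socle `soc*(R)` (the sum of all finite minimal
left ideals) to characters, `a ↦ (r ↦ χ(ra))` (which factors through the finite semisimple
part `E` of `R/rad R`), is injective. -/
theorem finitarily_torsion_free_character_injective_on_finsocle {R : Type*} [Ring R]
    [IsArtinianRing R] (χ : AddChar R Circle)
    (hχ : ∀ I : Ideal R, Finite I → (∀ x ∈ I, χ x = 1) → I = ⊥) :
    (∀ I : Ideal R, I ≠ ⊥ → Finite I → ∃ r : R, ∃ x ∈ I, χ (r * x) ≠ 1) ∧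
    Function.Injective
      (fun a : (sSup {I : Ideal R | IsAtom I ∧ Finite I} : Ideal R) =>
        fun r : R => χ (r * (a : R))) :=
  finitarily_torsion_free_character_injective_on_finsocle_general χ hχ
end

section
/- Let R be a left Artinian ring such that soc(_R R) ≅ _R(R/rad R) as left R-modules. Then R admits a left torsion-free homomorphism χ : R → ℚ/ℤ, i.e., an additive homomorphism whose kernel contains no nonzero left ideal of R. -/
/-!
Over the semisimple ring `S = R/rad R`, write `1 = ∑ eᵢ` with orthogonal idempotents such that
every `S eᵢ` is a minimal left ideal, pick characters `χᵢ` of `S` with `χᵢ eᵢ ≠ 0`, and put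
`ψ b = ∑ χᵢ (eᵢ b eᵢ)`. If `m ≠ 0` then `m eᵢ ≠ 0` for some `i`, minimality gives `x` with
`x m eᵢ = eᵢ`, and then `ψ (eᵢ x m) = χᵢ eᵢ ≠ 0`. Transported to the socle along the given
isomorphism and extended to `R` by injectivity of `ℚ/ℤ`, this character stays torsion-free because
the socle of a left Artinian ring meets every nonzero left ideal.
-/

universe u

/-- For `M = R` this is the paper's left torsion-free homomorphism. -/
def IsTorsionFreeHom (R : Type*) {M A : Type*} [Ring R] [AddCommGroup M] [Module R M]
    [AddCommGroup A] (f : M →+ A) : Prop :=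
  ∀ N : Submodule R M, (∀ x ∈ N, f x = 0) → N = ⊥

section TorsionFree

variable {R M N A : Type*} [Ring R] [AddCommGroup M] [Module R M] [AddCommGroup N] [Module R N]
  [AddCommGroup A]

theorem isTorsionFreeHom_iff {f : M →+ A} :
    IsTorsionFreeHom R f ↔ ∀ m : M, (∀ r : R, f (r • m) = 0) → m = 0 := by
  refine ⟨fun hf m hm ↦ ?_, fun hf N hN ↦ ?_⟩
  · have := hf (R ∙ m) fun x hx ↦ by
      obtain ⟨r, rfl⟩ := Submodule.mem_span_singleton.mp hx
      exact hm r
    simpa using this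
  · exact (Submodule.eq_bot_iff N).mpr fun m hm ↦ hf m fun r ↦ hN _ (N.smul_mem r hm)

theorem IsTorsionFreeHom.comp_linearEquiv {f : N →+ A} (hf : IsTorsionFreeHom R f)
    (e : M ≃ₗ[R] N) : IsTorsionFreeHom R (f.comp e.toLinearMap.toAddMonoidHom) := by
  rw [isTorsionFreeHom_iff] at hf ⊢
  intro m hm
  exact e.map_eq_zero_iff.mp <| hf (e m) fun r ↦ by simpa using hm r

theorem IsTorsionFreeHom.of_quotient {I : Ideal R} [I.IsTwoSided] {f : R ⧸ I →+ A}
    (hf : IsTorsionFreeHom (R ⧸ I) f) : IsTorsionFreeHom R f := by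
  rw [isTorsionFreeHom_iff] at hf ⊢
  intro m hm
  refine hf m fun s ↦ ?_
  obtain ⟨r, rfl⟩ := Ideal.Quotient.mk_surjective s
  exact hm r

theorem exists_isTorsionFreeHom_of_disjoint {N : Submodule R M}
    (hN : ∀ L : Submodule R M, Disjoint N L → L = ⊥) {ψ : N →+ AddCircle (1 : ℚ)}
    (hψ : IsTorsionFreeHom R ψ) : ∃ χ : M →+ AddCircle (1 : ℚ), IsTorsionFreeHom R χ := by
  obtain ⟨χ, hχ⟩ := CharacterModule.dual_surjective_of_injective
    N.subtype.toAddMonoidHom.toIntLinearMap Subtype.val_injective ψ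
  refine ⟨χ, fun L hL ↦ hN L <| Submodule.disjoint_iff_comap_eq_bot.mpr <| hψ _ fun x hx ↦ ?_⟩
  rw [← hχ]
  exact hL x hx

end TorsionFree

theorem eq_bot_of_disjoint_sSup_atoms {α : Type*} [CompleteLattice α] [IsAtomic α] {b : α}
    (h : Disjoint (sSup {a : α | IsAtom a}) b) : b = ⊥ := by
  by_contra hb
  obtain ⟨a, ha, hab⟩ := (eq_bot_or_exists_atom_le b).resolve_left hb
  exact ha.1 ((h.mono_left (le_sSup (show a ∈ {a : α | IsAtom a} from ha))).eq_bot_of_le hab)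

theorem CompleteOrthogonalIdempotents.exists_isTorsionFreeHom {S ι : Type*} [Ring S]
    [Fintype ι] {e : ι → S} (he : CompleteOrthogonalIdempotents e)
    (hmin : ∀ i, IsAtom (Submodule.span S {e i})) :
    ∃ ψ : S →+ AddCircle (1 : ℚ), IsTorsionFreeHom S ψ := by
  have hχ (i : ι) : ∃ χ : S →+ AddCircle (1 : ℚ), χ (e i) ≠ 0 :=
    CharacterModule.exists_character_apply_ne_zero_of_ne_zero fun h ↦ (hmin i).1 (by simp [h])
  choose χ hχ using hχ
  let ψ := ∑ i, (χ i).comp ((AddMonoidHom.mulLeft (e i)).comp (AddMonoidHom.mulRight (e i)))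
  have hψ (b : S) : ψ b = ∑ i, χ i (e i * b * e i) := by simp [ψ, mul_assoc]
  refine ⟨ψ, isTorsionFreeHom_iff.mpr fun m hm ↦ ?_⟩
  by_contra hm0
  obtain ⟨i, hi⟩ : ∃ i, m * e i ≠ 0 := by
    by_contra! h
    exact hm0 (by rw [← mul_one m, ← he.complete, Finset.mul_sum, Finset.sum_eq_zero fun i _ ↦ h i])
  have hspan : Submodule.span S {m * e i} = Submodule.span S {e i} :=
    (hmin i).le_iff.mp (Submodule.span_singleton_le_iff_mem _ _ |>.mpr
      (Submodule.mem_span_singleton.mpr ⟨m, rfl⟩)) |>.resolve_left (by simpa using hi)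
  obtain ⟨x, hx⟩ := Submodule.mem_span_singleton.mp
    (hspan ▸ Submodule.mem_span_singleton_self (e i))
  rw [smul_eq_mul] at hx
  have key := hm (e i * x)
  rw [smul_eq_mul, hψ, Finset.sum_eq_single i] at key
  · have : e i * (e i * x * m) * e i = e i := calc
      _ = e i * e i * (x * (m * e i)) := by simp only [mul_assoc]
      _ = e i := by rw [hx, he.idem i, he.idem i]
    exact hχ i (this ▸ key)
  · intro j _ hj
    simp only [← mul_assoc, he.ortho hj, zero_mul, map_zero]
  · simp

theorem IsSemisimpleRing.exists_completeOrthogonalIdempotents_isAtom_span (S : Type u) [Ring S]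
    [IsSemisimpleRing S] : ∃ (ι : Type u) (_ : Fintype ι) (e : ι → S),
      CompleteOrthogonalIdempotents e ∧ ∀ i, IsAtom (Submodule.span S {e i}) := by
  classical
  obtain ⟨s, hind, htop, hsimple⟩ := IsSemisimpleModule.exists_sSupIndep_sSup_simples_eq_top S S
  have : Fintype s := (WellFoundedGT.finite_of_sSupIndep hind).fintype
  let V : s → Ideal S := Subtype.val
  have hV : DirectSum.IsInternal V :=
    (DirectSum.isInternal_submodule_iff_iSupIndep_and_iSup_eq_top V).mpr
      ⟨(sSupIndep_iff s).mp hind, by rw [← sSup_eq_iSup', htop]⟩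
  let _ := hV.chooseDecomposition
  refine ⟨s, inferInstance, DirectSum.idempotent V,
    DirectSum.completeOrthogonalIdempotents_idempotent V, fun i ↦ ?_⟩
  suffices Submodule.span S {DirectSum.idempotent V i} = V i from
    this ▸ isSimpleModule_iff_isAtom.mp (hsimple _ i.2)
  refine le_antisymm ((Submodule.span_singleton_le_iff_mem _ _).mpr (SetLike.coe_mem _))
    fun x hx ↦ Submodule.mem_span_singleton.mpr ⟨x, ?_⟩
  rw [smul_eq_mul, ← DirectSum.decompose_eq_mul_idempotent, DirectSum.decompose_of_mem_same V hx]

theorem IsSemisimpleRing.exists_isTorsionFreeHom (S : Type*) [Ring S] [IsSemisimpleRing S] :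
    ∃ ψ : S →+ AddCircle (1 : ℚ), IsTorsionFreeHom S ψ :=
  have ⟨_, _, _, he, hmin⟩ := exists_completeOrthogonalIdempotents_isAtom_span S
  he.exists_isTorsionFreeHom hmin

/-- If `R` is a left Artinian ring whose left socle `soc(_R R)` (the sum of all minimal
left ideals) is isomorphic as a left `R`-module to `R/rad R`, then `R` admits a left
torsion-free additive homomorphism `χ : R → ℚ/ℤ`, i.e. one whose kernel contains no
nonzero left ideal. -/
theorem exists_left_torsion_free_hom_of_socle_iso {R : Type*} [Ring R] [IsArtinianRing R]
    (hsoc : Nonempty ((sSup {I : Ideal R | IsAtom I} : Ideal R) ≃ₗ[R]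
      R ⧸ (Ideal.jacobson (⊥ : Ideal R)))) :
    ∃ χ : R →+ AddCircle (1 : ℚ), ∀ I : Ideal R, (∀ x ∈ I, χ x = 0) → I = ⊥ := by
  obtain ⟨e⟩ := hsoc
  rw [Ideal.jacobson_bot] at e
  obtain ⟨ψ, hψ⟩ := IsSemisimpleRing.exists_isTorsionFreeHom (R ⧸ Ring.jacobson R)
  exact exists_isTorsionFreeHom_of_disjoint (fun _ ↦ eq_bot_of_disjoint_sSup_atoms)
    (hψ.of_quotient.comp_linearEquiv e)
end
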